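/- arXiv:1506.02189 — 2 statements merged into one kernel-verified Lean document; each statement's English description precedes it below -/
import Mathlib

section
/- The number of monic square-free polynomials of degree n ≥ 2 over the finite field F_q is q^n - q^{n-1}. -/
/-!
Every monic polynomial over a field factors uniquely as `g * h ^ 2` with `g` monic square-free
and `h` monic. Sorting the `q ^ n` monic polynomials of degree `n` by the degree `k` of `h` gives
`q ^ n = ∑_{k ≤ n / 2} s(n - 2k) q ^ k`, where `s(m)` counts the monic square-free polynomials
of degree `m`. The terms with `k ≥ 1` are `q` times the same sum for `n - 2`, that is
`q * q ^ (n - 2)`, so `s(n) = q ^ n - q ^ (n - 1)`.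
-/

open Polynomial UniqueFactorizationMonoid

namespace UniqueFactorizationMonoid

variable {R : Type*} [CommMonoidWithZero R] [UniqueFactorizationMonoid R]

theorem exists_squarefree_mul_sq (x : R) : ∃ a b : R, Squarefree a ∧ a * b ^ 2 = x := by
  induction x using WfDvdMonoid.induction_on_irreducible with
  | zero => exact ⟨1, 0, squarefree_one, by simp⟩
  | unit u hu => exact ⟨u, 1, hu.squarefree, by simp⟩
  | mul x p _ hp ih =>
    obtain ⟨a, b, ha, rfl⟩ := ih
    by_cases hpa : p ∣ a
    · obtain ⟨c, rfl⟩ := hpa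
      exact ⟨c, p * b, ha.of_mul_right, by simp only [sq]; ac_rfl⟩
    · refine ⟨p * a, b, ?_, mul_assoc p a _⟩
      exact squarefree_mul_iff.mpr ⟨hp.isRelPrime_iff_not_dvd.mpr hpa, hp.squarefree, ha⟩

theorem eq_of_squarefree_mul_sq_eq [NormalizationMonoid R] {a₁ b₁ a₂ b₂ : R}
    (ha₁ : Squarefree a₁) (ha₂ : Squarefree a₂) (hb₁ : normalize b₁ = b₁)
    (hb₂ : normalize b₂ = b₂) (h : a₁ * b₁ ^ 2 = a₂ * b₂ ^ 2) : b₁ = b₂ := by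
  classical
  nontriviality R
  rcases eq_or_ne b₁ 0 with rfl | hb₁0
  · exact (by simpa [ha₂.ne_zero] using h.symm : b₂ = 0).symm
  have hb₂0 : b₂ ≠ 0 := by
    rintro rfl
    simp [ha₁.ne_zero, hb₁0] at h
  have hfactors : normalizedFactors a₁ + 2 • normalizedFactors b₁ =
      normalizedFactors a₂ + 2 • normalizedFactors b₂ := by
    rw [← normalizedFactors_pow, ← normalizedFactors_pow,
      ← normalizedFactors_mul ha₁.ne_zero (pow_ne_zero _ hb₁0),
      ← normalizedFactors_mul ha₂.ne_zero (pow_ne_zero _ hb₂0), h]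
  have hsame : normalizedFactors b₁ = normalizedFactors b₂ := by
    ext p
    have h₁ := Multiset.nodup_iff_count_le_one.mp
      ((squarefree_iff_nodup_normalizedFactors ha₁.ne_zero).mp ha₁) p
    have h₂ := Multiset.nodup_iff_count_le_one.mp
      ((squarefree_iff_nodup_normalizedFactors ha₂.ne_zero).mp ha₂) p
    have hp := congrArg (Multiset.count p) hfactors
    simp only [Multiset.count_add, Multiset.count_nsmul] at hp
    omega
  exact ((associated_iff_normalizedFactors_eq_normalizedFactors hb₁0 hb₂0).mpr
    hsame).eq_of_normalized hb₁ hb₂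

end UniqueFactorizationMonoid

namespace Polynomial

theorem Monic.natDegree_mul_sq {R : Type*} [Semiring R] {g h : R[X]} (hg : g.Monic)
    (hh : h.Monic) : (g * h ^ 2).natDegree = g.natDegree + 2 * h.natDegree := by
  rw [hg.natDegree_mul (hh.pow 2), hh.natDegree_pow]

variable {F : Type*} [Field F]

theorem Monic.exists_squarefree_mul_sq {f : F[X]} (hf : f.Monic) :
    ∃ g h : F[X], g.Monic ∧ Squarefree g ∧ h.Monic ∧ g * h ^ 2 = f := by
  classical
  obtain ⟨a, b, ha, rfl⟩ := UniqueFactorizationMonoid.exists_squarefree_mul_sq f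
  have hb : b ≠ 0 := by rintro rfl; simp at hf
  refine ⟨normalize a, normalize b, monic_normalize ha.ne_zero,
    (normalize_associated a).squarefree_iff.mpr ha, monic_normalize hb, ?_⟩
  calc normalize a * normalize b ^ 2 = normalize (a * b ^ 2) := by simp only [sq, normalize_mul]
    _ = a * b ^ 2 := hf.normalize_eq_self

theorem eq_and_eq_of_squarefree_mul_sq_eq {g₁ h₁ g₂ h₂ : F[X]} (hg₁ : Squarefree g₁)
    (hg₂ : Squarefree g₂) (hh₁ : h₁.Monic) (hh₂ : h₂.Monic)
    (h : g₁ * h₁ ^ 2 = g₂ * h₂ ^ 2) : g₁ = g₂ ∧ h₁ = h₂ := by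
  classical
  obtain rfl :=
    eq_of_squarefree_mul_sq_eq hg₁ hg₂ hh₁.normalize_eq_self hh₂.normalize_eq_self h
  exact ⟨mul_right_cancel₀ (pow_ne_zero _ hh₁.ne_zero) h, rfl⟩

section MonicOfDegree

variable {R : Type*} [Semiring R] [Nontrivial R]

instance finite_monic_natDegree_eq [Finite R] (n : ℕ) :
    Finite {f : R[X] // f.Monic ∧ f.natDegree = n} :=
  .of_equiv _ ((monicEquivDegreeLT n).trans (degreeLTEquiv R n).toEquiv).symm

theorem card_monic_natDegree_eq (n : ℕ) :
    Nat.card {f : R[X] // f.Monic ∧ f.natDegree = n} = Nat.card R ^ n := by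
  rw [Nat.card_congr ((monicEquivDegreeLT n).trans (degreeLTEquiv R n).toEquiv), Nat.card_fun,
    Nat.card_fin]

instance finite_monic_squarefree_natDegree_eq [Finite R] (n : ℕ) :
    Finite {f : R[X] // f.Monic ∧ Squarefree f ∧ f.natDegree = n} :=
  .of_injective _ (Subtype.impEmbedding _ (fun f : R[X] ↦ f.Monic ∧ f.natDegree = n)
    fun _ hf ↦ ⟨hf.1, hf.2.2⟩).injective

end MonicOfDegree

noncomputable def squarefreeMulSqEquiv (n : ℕ) :
    (Σ k : Fin (n / 2 + 1), {g : F[X] // g.Monic ∧ Squarefree g ∧ g.natDegree = n - 2 * k} ×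
      {h : F[X] // h.Monic ∧ h.natDegree = k}) ≃ {f : F[X] // f.Monic ∧ f.natDegree = n} :=
  Equiv.ofBijective
    (fun ⟨k, ⟨g, hg, _, hgn⟩, ⟨h, hh, hhk⟩⟩ ↦ ⟨g * h ^ 2, hg.mul (hh.pow 2), by
      have := k.isLt
      rw [hg.natDegree_mul_sq hh]
      omega⟩)
    ⟨by
      rintro ⟨k₁, ⟨g₁, _, hg₁, _⟩, ⟨h₁, hh₁, hk₁⟩⟩ ⟨k₂, ⟨g₂, _, hg₂, _⟩, ⟨h₂, hh₂, hk₂⟩⟩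
        hf
      obtain ⟨rfl, rfl⟩ :=
        eq_and_eq_of_squarefree_mul_sq_eq hg₁ hg₂ hh₁ hh₂ (congrArg Subtype.val hf)
      obtain rfl : k₁ = k₂ := Fin.ext (hk₁.symm.trans hk₂)
      rfl,
    by
      rintro ⟨f, hf, hfn⟩
      obtain ⟨g, h, hg, hgs, hh, rfl⟩ := hf.exists_squarefree_mul_sq
      rw [hg.natDegree_mul_sq hh] at hfn
      refine ⟨⟨⟨h.natDegree, by omega⟩, ⟨g, hg, hgs, ?_⟩, ⟨h, hh, rfl⟩⟩, rfl⟩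
      rw [Fin.val_mk]
      omega⟩

theorem card_monic_natDegree_eq_sum [Finite F] (n : ℕ) :
    Nat.card F ^ n = ∑ k ∈ Finset.range (n / 2 + 1),
      Nat.card {g : F[X] // g.Monic ∧ Squarefree g ∧ g.natDegree = n - 2 * k} *
        Nat.card F ^ k := by
  rw [← card_monic_natDegree_eq, ← Nat.card_congr (squarefreeMulSqEquiv n), Nat.card_sigma,
    ← Fin.sum_univ_eq_sum_range]
  simp only [Nat.card_prod, card_monic_natDegree_eq]

theorem card_monic_squarefree_natDegree_add_two [Finite F] (n : ℕ) :
    Nat.card {g : F[X] // g.Monic ∧ Squarefree g ∧ g.natDegree = n + 2} + Nat.card F ^ (n + 1) =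
      Nat.card F ^ (n + 2) := by
  rw [card_monic_natDegree_eq_sum (n + 2), Finset.sum_range_succ', pow_succ,
    card_monic_natDegree_eq_sum n, Finset.sum_mul, add_comm, show (n + 2) / 2 = n / 2 + 1 by omega]
  simp only [mul_zero, Nat.sub_zero, pow_zero, mul_one]
  congr 1
  refine Finset.sum_congr rfl fun k _ ↦ ?_
  rw [show n + 2 - 2 * (k + 1) = n - 2 * k by omega]
  ring

end Polynomial

/-- The number of monic square-free polynomials of degree `n ≥ 2` over a finite
field `F` with `q` elements is `q ^ n - q ^ (n - 1)`. -/
theorem card_monic_squarefree_polynomials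
    (F : Type*) [Field F] [Fintype F] (n : ℕ) (hn : 2 ≤ n) :
    Nat.card {f : Polynomial F // f.Monic ∧ Squarefree f ∧ f.natDegree = n} =
      Fintype.card F ^ n - Fintype.card F ^ (n - 1) := by
  obtain ⟨m, rfl⟩ := Nat.exists_eq_add_of_le' hn
  have := Polynomial.card_monic_squarefree_natDegree_add_two (F := F) m
  rw [← Nat.card_eq_fintype_card, show m + 2 - 1 = m + 1 by omega]
  omega
end

section
/- Suppose either n or d is odd, and gcd(q,d)=1 (with finitely many characteristics excluded as needed). Then the average over all monic square-free polynomials f of degree n over F_q of the number of F_q-points (x,y) with y^d = f(x) equals q. Equivalently, the total count |{(x,y,f) : f monic square-free of degree n, y^d = f(x)}| equals q · (q^n - q^{n-1}). -/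
/-!
Fix `x : F`. By orthogonality of multiplicative characters, for every `c` the number of `y` with
`y ^ d = c` is `1 + ∑ χ c`, summed over the nontrivial characters `χ` with `χ ^ d = 1`. Hence the
pairs `(f, y)` with `y ^ d = f x` number `#{f}` plus the sums `∑_f χ (f x)` over square-free monic
`f` of degree `n`, and these sums vanish.

Writing every monic polynomial uniquely as `g ^ 2 * h` with `h` square-free expresses
`∑_{f monic, deg f = m} χ (f x)`, which is `0` for `m > 0` because translation by constants permutes
these `f`, as `∑_a (∑_{g monic, deg g = a} χ² (g x)) * (square-free sum in degree m - 2a)`. If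
`χ² ≠ 1` the coefficients with `a > 0` vanish as well; if `χ² = 1` then `d` is even, so `n` is odd
and induction over odd degrees applies. For `χ = 1` the same decomposition gives
`q ^ m = ∑_a q ^ a * #(square-free monics of degree m - 2a)`, so there are `q ^ n - q ^ (n - 1)`
square-free monic polynomials of degree `n`, for each of the `q` values of `x`.
-/

open Polynomial Finset
open scoped Classical

section SquarefreeDecomposition

variable {α : Type*} [CommMonoidWithZero α]

theorem exists_sq_mul_squarefree [UniqueFactorizationMonoid α] {x : α} (hx : x ≠ 0) :
    ∃ a b : α, Squarefree b ∧ a ^ 2 * b = x := by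
  induction x using WfDvdMonoid.induction_on_irreducible with
  | zero => contradiction
  | unit u hu => exact ⟨1, u, hu.squarefree, by simp⟩
  | mul z p hz hp ih =>
    obtain ⟨a, b, hb, rfl⟩ := ih hz
    by_cases hpb : p ∣ b
    · obtain ⟨c, rfl⟩ := hpb
      exact ⟨p * a, c, hb.of_mul_right, by rw [mul_pow, sq p]; ac_rfl⟩
    · exact ⟨a, p * b, squarefree_mul_iff.mpr ⟨hp.isRelPrime_iff_not_dvd.mpr hpb,
        hp.squarefree, hb⟩, mul_left_comm _ _ _⟩

theorem associated_of_sq_mul_squarefree_eq [GCDMonoid α] {a b a' b' : α}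
    (hb : Squarefree b) (hb' : Squarefree b') (h : a ^ 2 * b = a' ^ 2 * b') :
    Associated a a' := by
  obtain ⟨c, c', ha, ha', hcc'⟩ := extract_gcd a a'
  set u := gcd a a'
  rcases eq_or_ne u 0 with hu | hu
  · rw [ha, ha', hu, zero_mul, zero_mul]
  have hcop : IsRelPrime (c * c) (c' * c') := by
    have hrel := gcd_isUnit_iff_isRelPrime.mp hcc'
    exact (hrel.mul_left hrel).mul_right (hrel.mul_left hrel)
  have h' : (c * c) * b = (c' * c') * b' := by
    refine mul_left_cancel₀ (pow_ne_zero 2 hu) ?_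
    rw [ha, ha'] at h
    convert h using 1 <;> simp only [sq] <;> ac_rfl
  have hc : IsUnit c := hb' c (hcop.dvd_of_dvd_mul_left (h' ▸ dvd_mul_right _ _))
  have hc' : IsUnit c' := hb c' (hcop.symm.dvd_of_dvd_mul_left (h' ▸ dvd_mul_right _ _))
  rw [ha, ha']
  exact (associated_mul_unit_right u c hc).symm.trans (associated_mul_unit_right u c' hc')

end SquarefreeDecomposition

namespace Polynomial

variable {K : Type*} [Field K]

theorem exists_monic_sq_mul_squarefree {f : K[X]} (hf : f.Monic) :
    ∃ g h : K[X], g.Monic ∧ h.Monic ∧ Squarefree h ∧ g ^ 2 * h = f := by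
  obtain ⟨a, b, hb, hab⟩ := exists_sq_mul_squarefree hf.ne_zero
  have ha : a ≠ 0 := by rintro rfl; simp [hf.ne_zero.symm] at hab
  refine ⟨normalize a, normalize b, monic_normalize ha, monic_normalize hb.ne_zero,
    (normalize_associated b).squarefree_iff.mpr hb, ?_⟩
  conv_rhs => rw [← hf.normalize_eq_self, ← hab]
  rw [normalize_mul, sq, sq, normalize_mul]

theorem eq_and_eq_of_sq_mul_squarefree_eq {g h g' h' : K[X]} (hg : g.Monic) (hg' : g'.Monic)
    (hh : Squarefree h) (hh' : Squarefree h') (heq : g ^ 2 * h = g' ^ 2 * h') :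
    g = g' ∧ h = h' := by
  obtain rfl := eq_of_monic_of_associated hg hg' (associated_of_sq_mul_squarefree_eq hh hh' heq)
  exact ⟨rfl, mul_left_cancel₀ (pow_ne_zero 2 hg.ne_zero) heq⟩

variable (F : Type*) [Field F] [Fintype F]

noncomputable instance (m : ℕ) : Fintype {f : F[X] // f.Monic ∧ f.natDegree = m} :=
  Fintype.ofEquiv _ ((monicEquivDegreeLT m).trans (degreeLTEquiv F m).toEquiv).symm

noncomputable def monics (m : ℕ) : Finset F[X] :=
  (univ : Finset {f : F[X] // f.Monic ∧ f.natDegree = m}).map (Function.Embedding.subtype _)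

noncomputable def squarefreeMonics (m : ℕ) : Finset F[X] := {f ∈ monics F m | Squarefree f}

variable {F}

@[simp]
theorem mem_monics {m : ℕ} {f : F[X]} : f ∈ monics F m ↔ f.Monic ∧ f.natDegree = m := by
  simp [monics]

@[simp]
theorem mem_squarefreeMonics {m : ℕ} {f : F[X]} :
    f ∈ squarefreeMonics F m ↔ f.Monic ∧ Squarefree f ∧ f.natDegree = m := by
  simp [squarefreeMonics, and_right_comm, and_assoc]

theorem card_monics (m : ℕ) : #(monics F m) = Fintype.card F ^ m := by
  rw [monics, card_map, card_univ, Fintype.card_congr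
    ((monicEquivDegreeLT m).trans (degreeLTEquiv F m).toEquiv), Fintype.card_fun,
    Fintype.card_fin]

theorem monics_zero : monics F 0 = {1} := by
  ext f
  simp only [mem_monics, mem_singleton]
  exact ⟨fun ⟨hf, hd⟩ => hf.natDegree_eq_zero.mp hd, by rintro rfl; simp⟩

theorem add_C_mem_monics {m : ℕ} {f : F[X]} (hf : f ∈ monics F (m + 1)) (t : F) :
    f + C t ∈ monics F (m + 1) := by
  rw [mem_monics] at hf ⊢
  refine ⟨hf.1.add_of_left ?_, by rw [natDegree_add_C, hf.2]⟩
  exact degree_C_le.trans_lt (natDegree_pos_iff_degree_pos.mp (by omega))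

theorem sum_monics_eq_sum_sq_mul_squarefree {M : Type*} [AddCommMonoid M] (m : ℕ)
    (w : F[X] → M) :
    ∑ f ∈ monics F m, w f =
      ∑ a ∈ range (m / 2 + 1), ∑ g ∈ monics F a, ∑ h ∈ squarefreeMonics F (m - 2 * a),
        w (g ^ 2 * h) := by
  simp_rw [← sum_product']
  rw [← sum_sigma (range (m / 2 + 1)) (fun a => monics F a ×ˢ squarefreeMonics F (m - 2 * a))
    (fun x => w (x.2.1 ^ 2 * x.2.2))]
  refine (sum_nbij (fun x : Σ _ : ℕ, F[X] × F[X] => x.2.1 ^ 2 * x.2.2) ?_ ?_ ?_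
    fun _ _ => rfl).symm
  · rintro ⟨a, g, h⟩ hx
    simp only [mem_sigma, mem_range, mem_product, mem_monics, mem_squarefreeMonics] at hx ⊢
    obtain ⟨ha, ⟨hg, rfl⟩, hh, -, hhd⟩ := hx
    refine ⟨(hg.pow 2).mul hh, ?_⟩
    rw [hg.pow 2 |>.natDegree_mul hh, natDegree_pow]
    omega
  · rintro ⟨a, g, h⟩ hx ⟨a', g', h'⟩ hx' heq
    simp only [mem_coe, mem_sigma, mem_product, mem_monics, mem_squarefreeMonics] at hx hx' heq
    obtain ⟨-, ⟨hg, rfl⟩, -, hh, -⟩ := hx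
    obtain ⟨-, ⟨hg', rfl⟩, -, hh', -⟩ := hx'
    obtain ⟨rfl, rfl⟩ := eq_and_eq_of_sq_mul_squarefree_eq hg hg' hh hh' heq
    rfl
  · intro f hf
    simp only [mem_coe, mem_monics] at hf
    obtain ⟨g, h, hg, hh, hhs, rfl⟩ := exists_monic_sq_mul_squarefree hf.1
    have hdeg := hf.2
    rw [hg.pow 2 |>.natDegree_mul hh, natDegree_pow] at hdeg
    refine ⟨⟨g.natDegree, g, h⟩, ?_, rfl⟩
    simp only [mem_coe, mem_sigma, mem_range, mem_product, mem_monics, mem_squarefreeMonics,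
      and_true]
    exact ⟨by omega, hg, hh, hhs, by omega⟩

theorem card_pow_eq_sum_mul_card_squarefreeMonics (m : ℕ) :
    Fintype.card F ^ m =
      ∑ a ∈ range (m / 2 + 1), Fintype.card F ^ a * #(squarefreeMonics F (m - 2 * a)) := by
  simpa only [sum_const, smul_eq_mul, mul_one, card_monics] using
    sum_monics_eq_sum_sq_mul_squarefree (F := F) m (fun _ => (1 : ℕ))

theorem card_squarefreeMonics {m : ℕ} (hm : 2 ≤ m) :
    #(squarefreeMonics F m) = Fintype.card F ^ m - Fintype.card F ^ (m - 1) := by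
  obtain ⟨k, rfl⟩ : ∃ k, m = k + 2 := ⟨m - 2, by omega⟩
  have h := card_pow_eq_sum_mul_card_squarefreeMonics (F := F) (k + 2)
  set q := Fintype.card F
  have hshift : ∑ a ∈ range (k / 2 + 1),
      q ^ (a + 1) * #(squarefreeMonics F (k + 2 - 2 * (a + 1))) = q ^ (k + 1) := by
    rw [pow_succ', card_pow_eq_sum_mul_card_squarefreeMonics k, mul_sum]
    refine sum_congr rfl fun a _ => ?_
    rw [pow_succ', mul_assoc, show k + 2 - 2 * (a + 1) = k - 2 * a by omega]
  rw [show (k + 2) / 2 + 1 = k / 2 + 1 + 1 by omega, sum_range_succ', hshift] at h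
  simp only [pow_zero, one_mul, mul_zero, Nat.sub_zero] at h
  rw [show k + 2 - 1 = k + 1 by omega]
  omega

theorem sum_monics_succ_eval_eq_zero {φ : F → ℂ} (hφ : ∑ c, φ c = 0) (x : F) (m : ℕ) :
    ∑ f ∈ monics F (m + 1), φ (f.eval x) = 0 := by
  have htranslate (t : F) :
      ∑ f ∈ monics F (m + 1), φ (f.eval x) = ∑ f ∈ monics F (m + 1), φ (f.eval x + t) := by
    refine sum_nbij' (· - C t) (· + C t) ?_ ?_ ?_ ?_ ?_
    · intro f hf
      simpa [sub_eq_add_neg] using add_C_mem_monics hf (-t)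
    · exact fun f hf => add_C_mem_monics hf t
    all_goals intro f _; simp
  have hscaled : (Fintype.card F : ℂ) * ∑ f ∈ monics F (m + 1), φ (f.eval x) = 0 :=
    calc (Fintype.card F : ℂ) * ∑ f ∈ monics F (m + 1), φ (f.eval x)
        = ∑ t : F, ∑ f ∈ monics F (m + 1), φ (f.eval x + t) := by
          rw [← nsmul_eq_mul, ← card_univ, ← sum_const]
          exact sum_congr rfl fun t _ => htranslate t
      _ = ∑ f ∈ monics F (m + 1), ∑ c, φ c := by
          rw [sum_comm]
          exact sum_congr rfl fun f _ => Fintype.sum_equiv (Equiv.addLeft _) _ _ fun _ => rfl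
      _ = 0 := by simp [hφ]
  exact (mul_eq_zero.mp hscaled).resolve_left (by simp)

theorem sum_monics_apply_eval_eq_sum_mul (χ : MulChar F ℂ) (x : F) (m : ℕ) :
    ∑ f ∈ monics F m, χ (f.eval x) =
      ∑ a ∈ range (m / 2 + 1), (∑ g ∈ monics F a, (χ ^ 2) (g.eval x)) *
        ∑ h ∈ squarefreeMonics F (m - 2 * a), χ (h.eval x) := by
  rw [sum_monics_eq_sum_sq_mul_squarefree]
  refine sum_congr rfl fun a _ => ?_
  rw [sum_mul_sum]
  refine sum_congr rfl fun g _ => sum_congr rfl fun h _ => ?_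
  rw [eval_mul, eval_pow, map_mul, map_pow, MulChar.pow_apply' χ two_ne_zero]

theorem sum_squarefreeMonics_eval_eq_zero_of_forall_mul_eq_zero {χ : MulChar F ℂ}
    (hχ : χ ≠ 1) (x : F) {m : ℕ} (hm : m ≠ 0) (hterms : ∀ a ∈ range (m / 2 + 1), a ≠ 0 →
      (∑ g ∈ monics F a, (χ ^ 2) (g.eval x)) *
        ∑ h ∈ squarefreeMonics F (m - 2 * a), χ (h.eval x) = 0) :
    ∑ f ∈ squarefreeMonics F m, χ (f.eval x) = 0 := by
  obtain ⟨k, rfl⟩ := Nat.exists_eq_succ_of_ne_zero hm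
  have h0 := sum_monics_succ_eval_eq_zero (MulChar.sum_eq_zero_of_ne_one hχ) x k
  rw [sum_monics_apply_eval_eq_sum_mul, sum_eq_single_of_mem 0 (by simp) hterms, monics_zero] at h0
  simpa using h0

theorem sum_squarefreeMonics_eval_eq_zero_of_sq_ne_one {χ : MulChar F ℂ} (hχ : χ ^ 2 ≠ 1)
    (x : F) {m : ℕ} (hm : m ≠ 0) : ∑ f ∈ squarefreeMonics F m, χ (f.eval x) = 0 := by
  refine sum_squarefreeMonics_eval_eq_zero_of_forall_mul_eq_zero (by rintro rfl; simp at hχ) x hm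
    fun a _ ha => ?_
  obtain ⟨b, rfl⟩ := Nat.exists_eq_succ_of_ne_zero ha
  rw [sum_monics_succ_eval_eq_zero (MulChar.sum_eq_zero_of_ne_one hχ), zero_mul]

theorem sum_squarefreeMonics_eval_eq_zero_of_odd {χ : MulChar F ℂ} (hχ : χ ≠ 1) (x : F)
    {m : ℕ} (hm : Odd m) : ∑ f ∈ squarefreeMonics F m, χ (f.eval x) = 0 := by
  induction m using Nat.strong_induction_on with
  | _ m ih =>
    refine sum_squarefreeMonics_eval_eq_zero_of_forall_mul_eq_zero hχ x
      (by rintro rfl; simp at hm) fun a ha _ => ?_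
    rw [mem_range] at ha
    rw [ih (m - 2 * a) (by omega) (Nat.Odd.sub_even (by omega) hm (even_two_mul a)), mul_zero]

theorem sum_squarefreeMonics_eval_eq_zero {n d : ℕ} (hn : n ≠ 0) (hodd : Odd n ∨ Odd d)
    {χ : MulChar F ℂ} (hχ : χ ≠ 1) (hχd : χ ^ d = 1) (x : F) :
    ∑ f ∈ squarefreeMonics F n, χ (f.eval x) = 0 := by
  by_cases hχ2 : χ ^ 2 = 1
  · refine sum_squarefreeMonics_eval_eq_zero_of_odd hχ x (hodd.resolve_right ?_)
    rintro ⟨k, rfl⟩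
    exact hχ (by rwa [pow_succ, pow_mul, hχ2, one_pow, one_mul] at hχd)
  · exact sum_squarefreeMonics_eval_eq_zero_of_sq_ne_one hχ2 x hn

end Polynomial

namespace MulChar

variable {F : Type*} [Field F] [Fintype F]

noncomputable instance : Fintype (MulChar F ℂ) := Fintype.ofFinite _

instance : HasEnoughRootsOfUnity ℂ (Monoid.exponent Fˣ) :=
  have : NeZero (Monoid.exponent Fˣ) := ⟨Monoid.exponent_ne_zero_of_finite⟩
  inferInstance

theorem sum_apply_eq_ite (b : F) :
    ∑ χ : MulChar F ℂ, χ b = if b = 1 then (Fintype.card F : ℂ) - 1 else 0 := by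
  split_ifs with hb
  · rw [hb]
    simp only [map_one, sum_const, card_univ, nsmul_eq_mul, mul_one]
    rw [← Nat.card_eq_fintype_card, card_eq_card_units_of_hasEnoughRootsOfUnity,
      Nat.card_eq_fintype_card, Fintype.card_units, Nat.cast_sub Fintype.card_pos,
      Nat.cast_one]
  · obtain ⟨ψ, hψ⟩ := exists_apply_ne_one_of_hasEnoughRootsOfUnity F ℂ hb
    refine eq_zero_of_mul_eq_self_left hψ ?_
    simp only [mul_sum, ← mul_apply]
    exact Fintype.sum_bijective _ (Group.mulLeft_bijective ψ) _ _ fun _ => rfl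

theorem sum_apply_pow_eq_ite (χ : MulChar F ℂ) {d : ℕ} (hd : d ≠ 0) :
    ∑ y : F, χ (y ^ d) = if χ ^ d = 1 then (Fintype.card F : ℂ) - 1 else 0 := by
  simp_rw [map_pow, ← pow_apply' χ hd]
  split_ifs with h
  · rw [h, sum_one_eq_card_units, Fintype.card_units, Nat.cast_sub Fintype.card_pos, Nat.cast_one]
  · exact sum_eq_zero_of_ne_one h

end MulChar

section RootCount

variable {F : Type*} [Field F] [Fintype F]

theorem card_pow_eq_eq_sum_mulChar {d : ℕ} (hd : d ≠ 0) {c : F} (hc : c ≠ 0) :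
    (#{y : F | y ^ d = c} : ℂ) = ∑ χ : MulChar F ℂ with χ ^ d = 1, χ c := by
  have hq : (Fintype.card F : ℂ) - 1 ≠ 0 := by
    rw [sub_ne_zero, ← Nat.cast_one, Ne, Nat.cast_inj]
    exact Fintype.one_lt_card.ne'
  refine mul_left_cancel₀ hq ?_
  calc ((Fintype.card F : ℂ) - 1) * #{y : F | y ^ d = c}
      = ∑ y : F, ∑ χ : MulChar F ℂ, χ (c * (y ^ d)⁻¹) := by
        rw [natCast_card_filter, mul_sum]
        refine sum_congr rfl fun y _ => ?_
        have hroot : c * (y ^ d)⁻¹ = 1 ↔ y ^ d = c := by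
          rcases eq_or_ne (y ^ d) 0 with hy | hy
          · simp [hy, hc.symm]
          · rw [mul_inv_eq_one₀ hy, eq_comm]
        rw [MulChar.sum_apply_eq_ite, hroot]
        split_ifs <;> simp
    _ = ∑ χ : MulChar F ℂ, χ c * ∑ y : F, χ (y ^ d) := by
        rw [sum_comm]
        refine sum_congr rfl fun χ _ => ?_
        rw [mul_sum, ← Fintype.sum_equiv (Equiv.inv F) _ _ fun _ => rfl]
        simp [inv_pow]
    _ = ((Fintype.card F : ℂ) - 1) * ∑ χ : MulChar F ℂ with χ ^ d = 1, χ c := by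
        simp_rw [MulChar.sum_apply_pow_eq_ite _ hd, sum_filter, mul_sum]
        refine sum_congr rfl fun χ _ => ?_
        split_ifs <;> ring

theorem card_pow_eq_eq_one_add_sum_mulChar {d : ℕ} (hd : d ≠ 0) (c : F) :
    (#{y : F | y ^ d = c} : ℂ) = 1 + ∑ χ : MulChar F ℂ with χ ≠ 1 ∧ χ ^ d = 1, χ c := by
  rcases eq_or_ne c 0 with rfl | hc
  · have hroots : ({y : F | y ^ d = 0} : Finset F) = {0} := by
      ext y
      simp [pow_eq_zero_iff hd]
    rw [hroots, card_singleton, sum_eq_zero fun χ _ => χ.map_zero]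
    simp
  · rw [card_pow_eq_eq_sum_mulChar hd hc, ← add_sum_erase _ _ (a := 1) (by simp),
      MulChar.one_apply hc.isUnit]
    congr 2
    ext χ
    simp [and_comm]

theorem card_filter_pow_eq_eq_card {α : Type*} (s : Finset α) (v : α → F) {d : ℕ} (hd : d ≠ 0)
    (hv : ∀ χ : MulChar F ℂ, χ ≠ 1 → χ ^ d = 1 → ∑ a ∈ s, χ (v a) = 0) :
    #{p ∈ s ×ˢ (univ : Finset F) | p.2 ^ d = v p.1} = #s := by
  suffices (#{p ∈ s ×ˢ (univ : Finset F) | p.2 ^ d = v p.1} : ℂ) = #s by exact_mod_cast this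
  calc (#{p ∈ s ×ˢ (univ : Finset F) | p.2 ^ d = v p.1} : ℂ)
      = ∑ a ∈ s, (#{y : F | y ^ d = v a} : ℂ) := by
        simp_rw [natCast_card_filter, sum_product]
    _ = ∑ a ∈ s, (1 + ∑ χ : MulChar F ℂ with χ ≠ 1 ∧ χ ^ d = 1, χ (v a)) := by
        simp_rw [card_pow_eq_eq_one_add_sum_mulChar hd]
    _ = #s := by
        rw [sum_add_distrib, sum_comm, sum_eq_zero fun χ hχ => hv χ (mem_filter.mp hχ).2.1
          (mem_filter.mp hχ).2.2]
        simp

end RootCount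

/-- Suppose `n > 2` and either `n` or `d` is odd.  Excluding finitely many
characteristics, for every finite field `F` of cardinality `q` coprime to `d`,
the total number of triples `(f, x, y)` with `f` monic square-free of degree
`n` and `y ^ d = f x` equals `q * (q ^ n - q ^ (n - 1)) = q ^ (n + 1) - q ^ n`;
equivalently, the expected number of `F`-points on a random superelliptic curve
`y ^ d = f x` is `q`. -/
theorem average_points_superelliptic_odd (n d : ℕ) (hn : 2 < n)
    (hodd : Odd n ∨ Odd d) :
    ∃ S : Finset ℕ, ∀ (F : Type) [Field F] [Fintype F],
      ringChar F ∉ S → Nat.Coprime (Fintype.card F) d →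
      Nat.card {p : Polynomial F × F × F //
          p.1.Monic ∧ Squarefree p.1 ∧ p.1.natDegree = n ∧
          p.2.2 ^ d = p.1.eval p.2.1} =
        Fintype.card F ^ (n + 1) - Fintype.card F ^ n := by
  refine ⟨∅, fun F _ _ _ hcop => ?_⟩
  have hd : d ≠ 0 := by
    rintro rfl
    exact Fintype.one_lt_card.ne' (Nat.coprime_zero_right _ |>.mp hcop)
  have hvanish (χ : MulChar F ℂ) (hχ : χ ≠ 1) (hχd : χ ^ d = 1) :
      ∑ p ∈ squarefreeMonics F n ×ˢ univ, χ (p.1.eval p.2) = 0 := by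
    rw [sum_product_right]
    exact sum_eq_zero fun x _ => sum_squarefreeMonics_eval_eq_zero (by omega) hodd hχ hχd x
  let points : Finset ((F[X] × F) × F) :=
    {p ∈ (squarefreeMonics F n ×ˢ univ) ×ˢ univ | p.2 ^ d = p.1.1.eval p.1.2}
  rw [Nat.card_congr ((Equiv.prodAssoc _ _ _).symm.subtypeEquiv (q := (· ∈ points))
      fun p => by simp [points, and_assoc]),
    Nat.card_eq_finsetCard, card_filter_pow_eq_eq_card _ _ hd hvanish, card_product, card_univ,
    card_squarefreeMonics hn.le, Nat.sub_mul, ← pow_succ, ← pow_succ,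
    Nat.sub_add_cancel (by omega)]
end
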